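/- Let B(x) = Σ b_k x^k/k! satisfy e^{B(x)} - 1 - B(x) = x²/2 with b_1 = 1. Then B'(x)·B(x) = x - (x²/2)·B'(x), and consequently for k ≥ 2, b_k = -(1/(k+1))·( C(k,2)·b_{k-1} + Σ_{j=1}^{k-2} C(k,j)·b_{j+1}·b_{k-j} ). -/

import Mathlib

/-!
Since `B` has no constant term, `pcomp exp B` is the substitution `exp ∘ B`, so by the chain
rule and `exp' = exp` the derivative of `exp ∘ B = 1 + B + x²/2` reads
`(1 + B + x²/2) B' = B' + x`, which is the differential equation. The recurrence is its
coefficient of `x^k/k!`, computed with the binomial Leibniz rule for exponential generating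
functions: in `B' B` the terms `j = 0` and `j = k - 1` give `(k + 1) b_k`, the term `j = k`
vanishes because `b_0 = 0`, and `x²/2` is the exponential generating function of the indicator
of `2`, which contributes `C(k,2) b_{k-1}`.
-/

/-- Composition `f ∘ g` of formal power series (intended for `g` with zero constant term). -/
noncomputable def pcomp {A : Type*} [CommRing A] (f g : PowerSeries A) : PowerSeries A :=
  PowerSeries.mk fun n =>
    PowerSeries.coeff n
      (∑ k ∈ Finset.range (n + 1), PowerSeries.C (PowerSeries.coeff k f) * g ^ k)

open PowerSeries
open scoped Nat

theorem pcomp_eq_subst {A : Type*} [CommRing A] (f : A⟦X⟧) {g : A⟦X⟧}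
    (hg : constantCoeff g = 0) : pcomp f g = f.subst g := by
  ext n
  have hvanish : ∀ d, n < d → coeff n (g ^ d) = 0 := fun d hd =>
    X_pow_dvd_iff.mp (pow_dvd_pow_of_dvd (X_dvd_iff.mpr hg) d) n hd
  rw [coeff_subst' (.of_constantCoeff_zero' hg),
    finsum_eq_sum_of_support_subset (s := Finset.range (n + 1)), pcomp, coeff_mk, map_sum]
  · simp [smul_eq_mul, coeff_C_mul]
  · intro d hd
    simp only [Function.mem_support, Finset.coe_range, Set.mem_Iio] at hd ⊢
    by_contra h
    exact hd (by rw [hvanish d (by omega), smul_zero])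

theorem derivative_pcomp {A : Type*} [CommRing A] (f : A⟦X⟧) {g : A⟦X⟧}
    (hg : constantCoeff g = 0) :
    d⁄dX A (pcomp f g) = pcomp (d⁄dX A f) g * d⁄dX A g := by
  rw [pcomp_eq_subst _ hg, pcomp_eq_subst _ hg, derivative_subst (.of_constantCoeff_zero' hg)]

theorem derivative_half_X_sq {K : Type*} [Field K] [CharZero K] :
    d⁄dX K ((1 / 2 : K) • X ^ 2 : K⟦X⟧) = X := by
  rw [smul_eq_C_mul, Derivation.leibniz, derivative_C, derivative_pow, derivative_X]
  simp [← mul_assoc, ← map_ofNat C 2, ← map_mul]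

theorem factorial_mul_coeff_mul {R : Type*} [CommSemiring R] (F G : R⟦X⟧) (n : ℕ) :
    (n ! : R) * coeff n (F * G) = ∑ j ∈ Finset.range (n + 1),
      (n.choose j : R) * ((j ! : R) * coeff j F) * (((n - j)! : R) * coeff (n - j) G) := by
  rw [coeff_mul, Finset.Nat.sum_antidiagonal_eq_sum_range_succ_mk, Finset.mul_sum]
  refine Finset.sum_congr rfl fun j hj => ?_
  rw [← Nat.choose_mul_factorial_mul_factorial (Nat.lt_succ_iff.mp (Finset.mem_range.mp hj))]
  push_cast
  ring

theorem factorial_mul_coeff_derivative {R : Type*} [CommSemiring R] (F : R⟦X⟧) (n : ℕ) :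
    (n ! : R) * coeff n (d⁄dX R F) = ((n + 1)! : R) * coeff (n + 1) F := by
  rw [coeff_derivative, Nat.factorial_succ]
  push_cast
  ring

theorem factorial_mul_coeff_half_X_sq {K : Type*} [Field K] [CharZero K] (j : ℕ) :
    (j ! : K) * coeff j ((1 / 2 : K) • X ^ 2 : K⟦X⟧) = if j = 2 then 1 else 0 := by
  rw [coeff_smul, coeff_X_pow]
  split_ifs with h
  · subst h
    norm_num
  · simp

theorem sum_range_add_three_eq_add_sum_Icc {M : Type*} [AddCommMonoid M] (f : ℕ → M) (m : ℕ) :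
    ∑ j ∈ Finset.range (m + 3), f j =
      f 0 + ∑ j ∈ Finset.Icc 1 m, f j + f (m + 1) + f (m + 2) := by
  rw [Finset.sum_range_succ, Finset.sum_range_succ, Finset.range_eq_Ico,
    Finset.sum_eq_sum_Ico_succ_bot (by omega), Finset.Ico_add_one_right_eq_Icc]

/-- If `B(x) = Σ b_k x^k/k!` satisfies `e^{B(x)} - 1 - B(x) = x²/2` with `b_0 = 0`,
`b_1 = 1`, then `B'(x)·B(x) = x - (x²/2)·B'(x)` and, for `k ≥ 2`,
`b_k = -(1/(k+1))·(C(k,2) b_{k-1} + Σ_{j=1}^{k-2} C(k,j) b_{j+1} b_{k-j})`. -/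
theorem recurrence_B (B : PowerSeries ℚ) (b : ℕ → ℚ)
    (hB0 : PowerSeries.constantCoeff B = 0)
    (hB1 : PowerSeries.coeff 1 B = 1)
    (hB : pcomp (PowerSeries.exp ℚ) B - 1 - B = (1/2 : ℚ) • PowerSeries.X ^ 2)
    (hb : ∀ k, b k = (Nat.factorial k : ℚ) * PowerSeries.coeff k B) :
    PowerSeries.derivative ℚ B * B =
        PowerSeries.X - ((1/2 : ℚ) • PowerSeries.X ^ 2) * PowerSeries.derivative ℚ B ∧
      ∀ k : ℕ, 2 ≤ k →
        b k = -(1 / ((k : ℚ) + 1)) * ((Nat.choose k 2 : ℚ) * b (k - 1) +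
          ∑ j ∈ Finset.Icc 1 (k - 2), (Nat.choose k j : ℚ) * b (j + 1) * b (k - j)) := by
  have hE : pcomp (exp ℚ) B = 1 + B + (1 / 2 : ℚ) • X ^ 2 := by linear_combination hB
  have hODE : d⁄dX ℚ B * B + ((1 / 2 : ℚ) • X ^ 2) * d⁄dX ℚ B = X := by
    have hchain := derivative_pcomp (exp ℚ) hB0
    rw [derivative_exp, hE, map_add, map_add, derivative_one, derivative_half_X_sq] at hchain
    linear_combination -hchain
  refine ⟨by linear_combination hODE, fun k hk => ?_⟩
  obtain ⟨m, rfl⟩ : ∃ m, k = m + 2 := ⟨k - 2, by omega⟩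
  have hb0 : b 0 = 0 := by simp [hb, hB0]
  have hb1 : b 1 = 1 := by simp [hb, hB1]
  have hcoeff : ∑ j ∈ Finset.range (m + 3), ((m + 2).choose j : ℚ) * b (j + 1) * b (m + 2 - j) +
      ((m + 2).choose 2 : ℚ) * b (m + 1) = 0 := by
    have := congrArg (fun F => ((m + 2)! : ℚ) * coeff (m + 2) F) hODE
    simp only [mul_add, map_add, factorial_mul_coeff_mul, factorial_mul_coeff_derivative, ← hb,
      factorial_mul_coeff_half_X_sq, mul_ite, mul_one, mul_zero, ite_mul, zero_mul,
      Finset.sum_ite_eq', Finset.mem_range, coeff_X] at this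
    simpa using this
  rw [sum_range_add_three_eq_add_sum_Icc] at hcoeff
  simp only [Nat.choose_zero_right, Nat.choose_succ_self_right, Nat.choose_self, hb0, hb1,
    Nat.cast_one, Nat.cast_add, zero_add, one_mul, mul_one, mul_zero, add_zero, tsub_zero,
    tsub_self, Nat.reduceSubDiff, add_tsub_cancel_left] at hcoeff
  rw [show m + 2 - 1 = m + 1 from rfl, show m + 2 - 2 = m from rfl]
  field_simp
  push_cast
  linear_combination hcoeff
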